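/- arXiv:2203.05370 — 2 statements merged into one kernel-verified Lean document; each statement's English description precedes it below -/
import Mathlib

section
/- Let p > 2, δ > 0, and t > 0. Then there exists a constant C depending only on p such that for all ξ ∈ ℝ^d with ξ ≠ 0, ∫_0^t e^{−δ(t−s)|ξ|^2} s^{−2/p} ds ≤ C δ^{−(1−1/p)} t^{−1/p} |ξ|^{−2(1−1/p)}. -/
/-!
Write `A = δ‖ξ‖²`. Since `y ^ a ≤ exp y` for `y > 0` and `0 ≤ a ≤ 1`, the heat factor satisfies
`exp (-A (t - s)) ≤ (A (t - s)) ^ (-(1 - 1/p))`. What remains is the Beta convolution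
`∫₀ᵗ s ^ (-2/p) (t - s) ^ (-(1 - 1/p)) ds = t ^ (-1/p) B(1 - 2/p, 1/p)`, finite because `p > 2`.
-/

open MeasureTheory Set Real

lemma Real.exp_neg_le_rpow_neg {a x : ℝ} (ha₀ : 0 ≤ a) (ha₁ : a ≤ 1) (hx : 0 < x) :
    exp (-x) ≤ x ^ (-a) := by
  rw [exp_neg, rpow_neg hx.le]
  refine inv_anti₀ (rpow_pos_of_pos hx a) ?_
  rcases le_total x 1 with h | h
  · calc x ^ a ≤ 1 := rpow_le_one hx.le h ha₀
      _ ≤ exp x := one_le_exp hx.le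
  · calc x ^ a ≤ x ^ (1 : ℝ) := rpow_le_rpow_of_exponent_le h ha₁
      _ ≤ exp x := by rw [rpow_one]; linarith [add_one_le_exp x]

lemma intervalIntegrable_rpow_mul_sub_rpow {u v t : ℝ} (hu : 0 < u) (hv : 0 < v) (ht : 0 < t) :
    IntervalIntegrable (fun s => s ^ (u - 1) * (t - s) ^ (v - 1)) volume 0 t := by
  have hleft : IntervalIntegrable (fun s => s ^ (u - 1) * (t - s) ^ (v - 1)) volume 0 (t / 2) := by
    refine (intervalIntegral.intervalIntegrable_rpow' (by linarith)).mul_continuousOn ?_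
    refine (continuousOn_const.sub continuousOn_id).rpow_const fun s hs => Or.inl ?_
    rw [uIcc_of_le (by positivity)] at hs
    exact (sub_pos.2 (hs.2.trans_lt (half_lt_self ht))).ne'
  have hright : IntervalIntegrable (fun s => s ^ (u - 1) * (t - s) ^ (v - 1)) volume (t / 2) t := by
    have h := (intervalIntegral.intervalIntegrable_rpow' (r := v - 1) (a := 0) (b := t / 2)
      (by linarith)).comp_sub_left t
    rw [sub_zero, sub_half] at h
    refine h.symm.continuousOn_mul (continuousOn_id.rpow_const fun s hs => Or.inl ?_)
    rw [uIcc_of_le (half_le_self ht.le)] at hs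
    exact ((half_pos ht).trans_le hs.1).ne'
  exact hleft.trans hright

lemma integral_rpow_mul_sub_rpow {u v t : ℝ} (hu : 0 < u) (hv : 0 < v) (ht : 0 < t) :
    ∫ s in 0..t, s ^ (u - 1) * (t - s) ^ (v - 1) =
      t ^ (u + v - 1) * (Gamma u * Gamma v / Gamma (u + v)) := by
  apply Complex.ofReal_injective
  have hbeta := Complex.betaIntegral_scaled u v ht
  rw [Complex.betaIntegral_eq_Gamma_mul_div _ _ (by simpa) (by simpa)] at hbeta
  rw [← intervalIntegral.integral_ofReal]
  push_cast
  rw [Complex.ofReal_cpow ht.le, ← Complex.Gamma_ofReal, ← Complex.Gamma_ofReal,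
    ← Complex.Gamma_ofReal]
  push_cast
  rw [← hbeta]
  refine intervalIntegral.integral_congr fun s hs => ?_
  rw [uIcc_of_le ht.le] at hs
  rw [Complex.ofReal_cpow hs.1, Complex.ofReal_cpow (sub_nonneg.2 hs.2)]
  push_cast
  rfl

lemma integral_exp_neg_mul_sub_mul_rpow_le {A t u v : ℝ} (hA : 0 < A) (ht : 0 < t) (hu : 0 < u)
    (hv₀ : 0 < v) (hv₁ : v ≤ 1) :
    ∫ s in Ioc 0 t, exp (-(A * (t - s))) * s ^ (u - 1) ≤
      A ^ (v - 1) * t ^ (u + v - 1) * (Gamma u * Gamma v / Gamma (u + v)) := by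
  have hpointwise : ∀ s ∈ Ioo 0 t,
      exp (-(A * (t - s))) * s ^ (u - 1) ≤ A ^ (v - 1) * (s ^ (u - 1) * (t - s) ^ (v - 1)) := by
    intro s hs
    have hts : 0 < t - s := sub_pos.2 hs.2
    have hexp : exp (-(A * (t - s))) ≤ A ^ (v - 1) * (t - s) ^ (v - 1) := by
      rw [← mul_rpow hA.le hts.le]
      simpa only [neg_sub] using
        exp_neg_le_rpow_neg (a := 1 - v) (by linarith) (by linarith) (mul_pos hA hts)
    calc _ ≤ A ^ (v - 1) * (t - s) ^ (v - 1) * s ^ (u - 1) :=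
          mul_le_mul_of_nonneg_right hexp (rpow_nonneg hs.1.le _)
      _ = _ := by ring
  have hmajorant := (intervalIntegrable_iff_integrableOn_Ioo_of_le ht.le).mp
    (intervalIntegrable_rpow_mul_sub_rpow hu hv₀ ht)
  calc ∫ s in Ioc 0 t, exp (-(A * (t - s))) * s ^ (u - 1)
      = ∫ s in Ioo 0 t, exp (-(A * (t - s))) * s ^ (u - 1) := integral_Ioc_eq_integral_Ioo
    _ ≤ ∫ s in Ioo 0 t, A ^ (v - 1) * (s ^ (u - 1) * (t - s) ^ (v - 1)) :=
        setIntegral_mono_of_nonneg (fun s hs => mul_nonneg (exp_pos _).le (rpow_nonneg hs.1.le _))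
          hpointwise (hmajorant.const_mul _)
    _ = A ^ (v - 1) * t ^ (u + v - 1) * (Gamma u * Gamma v / Gamma (u + v)) := by
        rw [integral_const_mul, ← integral_Ioc_eq_integral_Ioo,
          ← intervalIntegral.integral_of_le ht.le, integral_rpow_mul_sub_rpow hu hv₀ ht, mul_assoc]

theorem stmt6 (p : ℝ) (hp : 2 < p) :
    ∃ C > 0, ∀ δ t : ℝ, 0 < δ → 0 < t →
      ∀ (d : ℕ) (ξ : EuclideanSpace ℝ (Fin d)), ξ ≠ 0 →
        (∫ s in Set.Ioc (0 : ℝ) t, Real.exp (-δ * (t - s) * ‖ξ‖ ^ 2) * s ^ (-(2 / p)))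
          ≤ C * δ ^ (-(1 - 1 / p)) * t ^ (-(1 / p)) * ‖ξ‖ ^ (-(2 * (1 - 1 / p))) := by
  have hu : 0 < 1 - 2 / p := by rw [sub_pos, div_lt_one (by linarith)]; exact hp
  have hv₀ : 0 < 1 / p := by positivity
  have hv₁ : 1 / p ≤ 1 := by rw [div_le_one (by linarith)]; linarith
  refine ⟨Gamma (1 - 2 / p) * Gamma (1 / p) / Gamma (1 - 2 / p + 1 / p), by positivity, ?_⟩
  intro δ t hδ ht d ξ hξ
  have hA : 0 < δ * ‖ξ‖ ^ 2 := by positivity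
  calc ∫ s in Ioc 0 t, exp (-δ * (t - s) * ‖ξ‖ ^ 2) * s ^ (-(2 / p))
      = ∫ s in Ioc 0 t, exp (-(δ * ‖ξ‖ ^ 2 * (t - s))) * s ^ (1 - 2 / p - 1) := by
        congr! 4 with s <;> ring
    _ ≤ (δ * ‖ξ‖ ^ 2) ^ (1 / p - 1) * t ^ (1 - 2 / p + 1 / p - 1) *
          (Gamma (1 - 2 / p) * Gamma (1 / p) / Gamma (1 - 2 / p + 1 / p)) :=
        integral_exp_neg_mul_sub_mul_rpow_le hA ht hu hv₀ hv₁
    _ = _ := by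
        rw [mul_rpow hδ.le (by positivity), ← rpow_natCast, ← rpow_mul (norm_nonneg ξ)]
        ring_nf
end

section
/- Let d ≥ 2, p > 2, c₀ > 0. For every v ∈ PM^{d−1}(ℝ^d), sup_{t>0} t^{1/p} ‖e^{c₀√t|D|} e^{c₀ t Δ} v‖_{PM^{d−1+2/p}} ≤ 2^{1/p} e^{2c₀} c₀^{−1/p} ‖v‖_{PM^{d−1}}. -/
lemma key15 (p c₀ x : ℝ) (hp : 2 < p) (hc : 0 < c₀) (hx : 0 < x) :
    x ^ (1/p) * (Real.exp (c₀ * Real.sqrt x) * Real.exp (-(c₀ * x)))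
      ≤ 2 ^ (1/p) * Real.exp (2*c₀) * c₀ ^ (-(1/p)) := by
  have hp0 : 0 < p := by linarith
  have h1p : 0 < 1/p := by positivity
  have h1p1 : 1/p ≤ 1 := by
    rw [div_le_one hp0]; linarith
  set y := c₀ * x / 2 with hy
  have hy0 : 0 < y := by positivity
  have hxsplit : x ^ (1/p) = (2/c₀) ^ (1/p) * y ^ (1/p) := by
    rw [← Real.mul_rpow (by positivity) hy0.le]
    congr 1
    field_simp
    ring
  have h2 : (2/c₀ : ℝ) ^ (1/p) = 2 ^ (1/p) * c₀ ^ (-(1/p)) := by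
    rw [Real.div_rpow (by norm_num) hc.le, Real.rpow_neg hc.le, div_eq_mul_inv]
  have hyexp : y ^ (1/p) ≤ Real.exp y := by
    rcases le_total y 1 with h | h
    · calc y ^ (1/p) ≤ 1 ^ (1/p) := Real.rpow_le_rpow hy0.le h h1p.le
        _ = 1 := Real.one_rpow _
        _ ≤ Real.exp y := Real.one_le_exp hy0.le
    · calc y ^ (1/p) ≤ y ^ (1:ℝ) := Real.rpow_le_rpow_of_exponent_le h h1p1
        _ = y := Real.rpow_one y
        _ ≤ Real.exp y := by linarith [Real.add_one_le_exp y]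
  have hA : y ^ (1/p) * Real.exp (-y) ≤ 1 := by
    have := mul_le_mul_of_nonneg_right hyexp (Real.exp_nonneg (-y))
    rwa [← Real.exp_add, add_neg_cancel, Real.exp_zero] at this
  have hB : Real.exp (c₀ * Real.sqrt x) * Real.exp (-y) ≤ Real.exp (2*c₀) := by
    rw [← Real.exp_add, Real.exp_le_exp]
    have hs := Real.sq_sqrt hx.le
    nlinarith [Real.sqrt_nonneg x, sq_nonneg (Real.sqrt x - 1), hc.le]
  have hsplit2 : Real.exp (-(c₀ * x)) = Real.exp (-y) * Real.exp (-y) := by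
    rw [← Real.exp_add]; congr 1; rw [hy]; ring
  calc x ^ (1/p) * (Real.exp (c₀ * Real.sqrt x) * Real.exp (-(c₀ * x)))
      = (2/c₀) ^ (1/p) * ((y ^ (1/p) * Real.exp (-y)) *
          (Real.exp (c₀ * Real.sqrt x) * Real.exp (-y))) := by
        rw [hxsplit, hsplit2]; ring
    _ ≤ (2/c₀) ^ (1/p) * (1 * Real.exp (2*c₀)) := by
        apply mul_le_mul_of_nonneg_left _ (by positivity)
        exact mul_le_mul hA hB (by positivity) zero_le_one
    _ = 2 ^ (1/p) * Real.exp (2*c₀) * c₀ ^ (-(1/p)) := by rw [h2]; ring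

lemma aux15 (p c₀ t s : ℝ) (hp : 2 < p) (hc : 0 < c₀) (ht : 0 < t) (hs : 0 < s) :
    t ^ (1/p) * s ^ (2/p) * (Real.exp (c₀ * Real.sqrt t * s) * Real.exp (-c₀ * t * s^2))
      ≤ 2 ^ (1/p) * Real.exp (2*c₀) * c₀ ^ (-(1/p)) := by
  have hx : 0 < t * s^2 := by positivity
  have h1 : t ^ (1/p) * s ^ (2/p) = (t * s^2) ^ (1/p) := by
    rw [Real.mul_rpow ht.le (by positivity)]
    congr 1
    rw [← Real.rpow_natCast s 2, ← Real.rpow_mul hs.le]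
    congr 1; ring
  have hsx : c₀ * Real.sqrt t * s = c₀ * Real.sqrt (t * s^2) := by
    rw [Real.sqrt_mul ht.le, Real.sqrt_sq hs.le, mul_assoc]
  have he : -c₀ * t * s^2 = -(c₀ * (t * s^2)) := by ring
  rw [h1, hsx, he]
  exact key15 p c₀ (t * s^2) hp hc hx

/-- Gevrey-analytic heat semigroup estimate in pseudo-measure spaces, on the Fourier side:
if `g = v̂` satisfies `‖ξ‖^{d-1} |g ξ| ≤ M = ‖v‖_{PM^{d-1}}`, then
`t^{1/p} ‖e^{c₀√t |D|} e^{c₀ t Δ} v‖_{PM^{d-1+2/p}} ≤ 2^{1/p} e^{2c₀} c₀^{-1/p} M`. -/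
theorem stmt15 (d : ℕ) (hd : 2 ≤ d) (p c₀ : ℝ) (hp : 2 < p) (hc : 0 < c₀)
    (g : EuclideanSpace ℝ (Fin d) → ℂ) (M : ℝ)
    (hM : ∀ ξ : EuclideanSpace ℝ (Fin d), ‖ξ‖ ^ ((d : ℝ) - 1) * ‖g ξ‖ ≤ M) :
    ∀ t : ℝ, 0 < t → ∀ ξ : EuclideanSpace ℝ (Fin d),
      t ^ (1 / p) * (‖ξ‖ ^ ((d : ℝ) - 1 + 2 / p) *
          ‖(Real.exp (c₀ * Real.sqrt t * ‖ξ‖) * Real.exp (-c₀ * t * ‖ξ‖ ^ 2)) • g ξ‖)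
        ≤ (2 : ℝ) ^ (1 / p) * Real.exp (2 * c₀) * c₀ ^ (-(1 / p)) * M := by
  intro t ht ξ
  have hp0 : 0 < p := by linarith
  have hM0 : 0 ≤ M := le_trans (by positivity) (hM ξ)
  have hexp : 0 < Real.exp (c₀ * Real.sqrt t * ‖ξ‖) * Real.exp (-c₀ * t * ‖ξ‖ ^ 2) := by
    positivity
  rw [norm_smul, Real.norm_eq_abs, abs_of_pos hexp]
  rcases eq_or_lt_of_le (norm_nonneg ξ) with hs | hs
  · rw [show ‖ξ‖ ^ ((d : ℝ) - 1 + 2 / p) = 0 by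
      rw [← hs, Real.zero_rpow]
      have hd1 : (1:ℝ) ≤ (d:ℝ) - 1 := by
        have : (2:ℝ) ≤ (d:ℝ) := by exact_mod_cast hd
        linarith
      positivity]
    rw [zero_mul, mul_zero]
    exact mul_nonneg (by positivity) hM0
  · rw [Real.rpow_add hs]
    calc t ^ (1/p) * (‖ξ‖ ^ ((d:ℝ)-1) * ‖ξ‖ ^ (2/p) *
          (Real.exp (c₀ * Real.sqrt t * ‖ξ‖) * Real.exp (-c₀ * t * ‖ξ‖ ^ 2) * ‖g ξ‖))
        = (t ^ (1/p) * ‖ξ‖ ^ (2/p) *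
            (Real.exp (c₀ * Real.sqrt t * ‖ξ‖) * Real.exp (-c₀ * t * ‖ξ‖ ^ 2))) *
          (‖ξ‖ ^ ((d:ℝ)-1) * ‖g ξ‖) := by ring
      _ ≤ (2 ^ (1/p) * Real.exp (2*c₀) * c₀ ^ (-(1/p))) * M := by
          apply mul_le_mul (aux15 p c₀ t ‖ξ‖ hp hc ht hs) (hM ξ) (by positivity)
            (by positivity)
end
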